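/- For the generalized amplitude-damping channel Λ_a with Kraus operators E_{uv} = √(p̄_u) |v⟩⟨u| for u ≠ v ∈ {0,1}^n and E_0 = √(I − Σ_{u≠v} E_{uv}† E_{uv}), where (2^n − 1) p̄_u ≤ 1, the average fidelity B_k in the Γ_{2k} subspace equals 1 − Σ_{u∈{0,1}^n} p̄_u for every k with 1 ≤ k ≤ n, and B_0 = 1. -/

import Mathlib

open scoped BigOperators

/-- The Jordan–Wigner realization of `γ_{D(S)} = Π_{l ∈ S} (i Z_l)`: the diagonal matrix with
entry `Π_{l ∈ S} i·(−1)^{x_l}` at the computational-basis state `x`. -/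
noncomputable def gammaD (n : ℕ) (S : Finset (Fin n)) :
    Matrix (Fin n → Bool) (Fin n → Bool) ℂ :=
  Matrix.diagonal fun x => ∏ l ∈ S, (Complex.I * (if x l then (-1:ℂ) else 1))

/-- The average fidelity of a noise channel `Λ` in the `Γ_{2k}` subspace:
`B_k = (−i)^k/(2^n C(n,k)) Σ_x Σ_{|S|=k} (−1)^{Σ_{j∈S} x_j} tr(|x⟩⟨x| Λ(γ_{D(S)}))`. -/
noncomputable def Bk (n k : ℕ)
    (Λ : Matrix (Fin n → Bool) (Fin n → Bool) ℂ → Matrix (Fin n → Bool) (Fin n → Bool) ℂ) : ℂ :=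
  ((-Complex.I)^k / ((2:ℂ)^n * (n.choose k : ℂ))) *
    ∑ x : Fin n → Bool, ∑ S ∈ (Finset.univ : Finset (Fin n)).powersetCard k,
      (∏ j ∈ S, (if x j then (-1:ℂ) else 1)) *
        Matrix.trace (Matrix.single x x (1:ℂ) * Λ (gammaD n S))

/-- Kraus operator `E_{uv} = √(p̄_u) |v⟩⟨u|` of the generalized amplitude-damping channel. -/
noncomputable def Euv (n : ℕ) (pbar : (Fin n → Bool) → ℝ) (u v : Fin n → Bool) :
    Matrix (Fin n → Bool) (Fin n → Bool) ℂ :=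
  ((Real.sqrt (pbar u) : ℝ) : ℂ) • Matrix.single v u (1:ℂ)

/-- `E_0 = √(I − Σ_{u≠v} E_{uv}† E_{uv})`, which equals the diagonal matrix with entries
`√(1 − (2^n − 1) p̄_u)`. -/
noncomputable def E0 (n : ℕ) (pbar : (Fin n → Bool) → ℝ) :
    Matrix (Fin n → Bool) (Fin n → Bool) ℂ :=
  Matrix.diagonal fun u => ((Real.sqrt (1 - ((2:ℝ)^n - 1) * pbar u) : ℝ) : ℂ)

/-- The generalized amplitude-damping channel
`Λ_a(A) = Σ_{u ≠ v} E_{uv} A E_{uv}† + E_0 A E_0†`. -/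
noncomputable def ampDamp (n : ℕ) (pbar : (Fin n → Bool) → ℝ)
    (A : Matrix (Fin n → Bool) (Fin n → Bool) ℂ) :
    Matrix (Fin n → Bool) (Fin n → Bool) ℂ :=
  (∑ u : Fin n → Bool, ∑ v ∈ Finset.univ.filter (fun v => v ≠ u),
      Euv n pbar u v * A * (Euv n pbar u v).conjTranspose) +
    E0 n pbar * A * (E0 n pbar).conjTranspose

section Aux

lemma std_conjT {n : ℕ} (u v : Fin n → Bool) :
    (Matrix.single v u (1:ℂ)).conjTranspose = Matrix.single u v 1 := by
  ext i j
  simp [Matrix.conjTranspose_apply, Matrix.single, and_comm]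

lemma std_mul_diag {n : ℕ} (u v : Fin n → Bool) (c : ℂ) (a : (Fin n → Bool) → ℂ) :
    Matrix.single v u c * Matrix.diagonal a = Matrix.single v u (c * a u) := by
  ext i j
  simp only [Matrix.mul_diagonal, Matrix.single, Matrix.of_apply]
  split_ifs with h
  · rw [h.2]
  · simp

lemma trace_std {n : ℕ} (x : Fin n → Bool) (M : Matrix (Fin n → Bool) (Fin n → Bool) ℂ) :
    Matrix.trace (Matrix.single x x (1:ℂ) * M) = M x x := by
  simp [Matrix.trace, Matrix.diag, Matrix.mul_apply, Matrix.single,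
    ite_and, Finset.sum_ite_eq]

lemma sum_chi_zero {n : ℕ} (S : Finset (Fin n)) (hS : S.Nonempty) :
    ∑ x : Fin n → Bool, ∏ j ∈ S, (if x j then (-1:ℂ) else 1) = 0 := by
  obtain ⟨j, hj⟩ := hS
  set F : (Fin n → Bool) → ℂ := fun x => ∏ l ∈ S, (if x l then (-1:ℂ) else 1) with hF
  set σ : (Fin n → Bool) → (Fin n → Bool) := fun x => Function.update x j (!x j) with hσ
  have hinv : Function.Involutive σ := by
    intro x
    funext l
    by_cases h : l = j
    · subst h; simp [hσ, Function.update_self]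
    · simp [hσ, Function.update_of_ne h]
  have hkey : ∀ x, F (σ x) = - F x := by
    intro x
    rw [hF]
    simp only
    rw [← Finset.mul_prod_erase S _ hj, ← Finset.mul_prod_erase S
      (fun l => if x l then (-1:ℂ) else 1) hj]
    have h1 : ∏ l ∈ S.erase j, (if (σ x) l then (-1:ℂ) else 1)
        = ∏ l ∈ S.erase j, (if x l then (-1:ℂ) else 1) :=
      Finset.prod_congr rfl fun l hl => by
        rw [hσ]; simp only [Function.update_of_ne (Finset.ne_of_mem_erase hl)]
    rw [h1, hσ]
    simp only [Function.update_self]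
    cases hx : x j <;> simp
  have h2 : ∑ x, F (σ x) = ∑ x, F x :=
    Fintype.sum_bijective σ hinv.bijective _ _ (fun x => rfl)
  have h3 : ∑ x, F (σ x) = - ∑ x, F x := by
    rw [← Finset.sum_neg_distrib]
    exact Finset.sum_congr rfl fun x _ => hkey x
  have h4 : ∑ x, F x = - ∑ x, F x := h2.symm.trans h3
  linear_combination h4 / 2

lemma chi_sq {n : ℕ} (S : Finset (Fin n)) (x : Fin n → Bool) :
    (∏ j ∈ S, (if x j then (-1:ℂ) else 1)) * (∏ j ∈ S, (if x j then (-1:ℂ) else 1)) = 1 := by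
  rw [← Finset.prod_mul_distrib]
  rw [Finset.prod_congr rfl (fun j _ => by cases x j <;> norm_num : ∀ j ∈ S,
    (if x j then (-1:ℂ) else 1) * (if x j then (-1:ℂ) else 1) = 1)]
  exact Finset.prod_const_one

end Aux

section Entry

variable {n : ℕ} {pbar : (Fin n → Bool) → ℝ}

lemma euv_entry (hp0 : ∀ u, 0 ≤ pbar u) (a : (Fin n → Bool) → ℂ) (u v x : Fin n → Bool) :
    (Euv n pbar u v * Matrix.diagonal a * (Euv n pbar u v).conjTranspose) x x
      = (if x = v then ((pbar u : ℝ) : ℂ) * a u else 0) := by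
  unfold Euv
  rw [Matrix.conjTranspose_smul, std_conjT, Matrix.smul_mul, Matrix.smul_mul,
    Matrix.mul_smul, std_mul_diag, Matrix.single_mul_single_same]
  simp only [Matrix.smul_apply, smul_smul, Matrix.single, Matrix.of_apply]
  have hs : ((Real.sqrt (pbar u) : ℝ) : ℂ) * star ((Real.sqrt (pbar u) : ℝ) : ℂ)
      = ((pbar u : ℝ) : ℂ) := by
    rw [Complex.star_def, Complex.conj_ofReal, ← Complex.ofReal_mul,
      Real.mul_self_sqrt (hp0 u)]
  rw [hs]
  by_cases h : x = v
  · simp [h, smul_eq_mul, mul_comm]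
  · simp only [if_neg h, if_neg (fun hh : v = x ∧ v = x => h hh.1.symm), smul_zero]

lemma e0_entry (hp1 : ∀ u, ((2:ℝ)^n - 1) * pbar u ≤ 1) (a : (Fin n → Bool) → ℂ)
    (x : Fin n → Bool) :
    (E0 n pbar * Matrix.diagonal a * (E0 n pbar).conjTranspose) x x
      = ((1 - ((2:ℝ)^n - 1) * pbar x : ℝ) : ℂ) * a x := by
  unfold E0
  rw [Matrix.diagonal_conjTranspose, Matrix.diagonal_mul_diagonal, Matrix.diagonal_mul_diagonal]
  simp only [Matrix.diagonal_apply_eq, Pi.star_apply, Complex.star_def, Complex.conj_ofReal]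
  rw [mul_comm _ (a x), mul_assoc, ← Complex.ofReal_mul,
    Real.mul_self_sqrt (by linarith [hp1 x])]
  ring

lemma ampDamp_diag (hp0 : ∀ u, 0 ≤ pbar u) (hp1 : ∀ u, ((2:ℝ)^n - 1) * pbar u ≤ 1)
    (a : (Fin n → Bool) → ℂ) (x : Fin n → Bool) :
    ampDamp n pbar (Matrix.diagonal a) x x
      = (∑ u : Fin n → Bool, ((pbar u : ℝ) : ℂ) * a u)
        + a x * (1 - (2:ℂ)^n * ((pbar x : ℝ) : ℂ)) := by
  unfold ampDamp
  rw [Matrix.add_apply]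
  have h1 : (∑ u : Fin n → Bool, ∑ v ∈ Finset.univ.filter (fun v => v ≠ u),
      Euv n pbar u v * Matrix.diagonal a * (Euv n pbar u v).conjTranspose) x x
      = ∑ u : Fin n → Bool, (if x ≠ u then ((pbar u : ℝ) : ℂ) * a u else 0) := by
    rw [Matrix.sum_apply]
    refine Finset.sum_congr rfl fun u _ => ?_
    rw [Matrix.sum_apply]
    rw [Finset.sum_congr rfl fun v _ => euv_entry hp0 a u v x]
    rw [Finset.sum_ite_eq]
    simp [Finset.mem_filter]
  rw [h1, e0_entry hp1 a x]
  have h2 : ∑ u : Fin n → Bool, (if x ≠ u then ((pbar u : ℝ) : ℂ) * a u else 0)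
      = (∑ u : Fin n → Bool, ((pbar u : ℝ) : ℂ) * a u) - ((pbar x : ℝ) : ℂ) * a x := by
    rw [Finset.sum_congr rfl (fun u _ => show (if x ≠ u then ((pbar u : ℝ) : ℂ) * a u else 0)
        = ((pbar u : ℝ) : ℂ) * a u - (if u = x then ((pbar u : ℝ) : ℂ) * a u else 0) by
      by_cases h : x = u
      · subst h; simp
      · rw [if_pos h, if_neg (fun hh : u = x => h hh.symm), sub_zero])]
    rw [Finset.sum_sub_distrib, Finset.sum_ite_eq' Finset.univ x
      (fun u => ((pbar u : ℝ) : ℂ) * a u)]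
    simp
  rw [h2]
  push_cast
  ring

end Entry

/-- For the generalized amplitude-damping channel with `0 ≤ p̄_u` and `(2^n − 1) p̄_u ≤ 1`,
the average fidelity `B_k` in the `Γ_{2k}` subspace equals `1 − Σ_u p̄_u` for every
`1 ≤ k ≤ n`, and `B_0 = 1`. -/
theorem Bk_ampDamp (n : ℕ) (pbar : (Fin n → Bool) → ℝ)
    (hp0 : ∀ u, 0 ≤ pbar u) (hp1 : ∀ u, ((2:ℝ)^n - 1) * pbar u ≤ 1) :
    (∀ k, 1 ≤ k → k ≤ n →
      Bk n k (ampDamp n pbar) = 1 - ∑ u : Fin n → Bool, ((pbar u : ℝ) : ℂ)) ∧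
    Bk n 0 (ampDamp n pbar) = 1 := by
  set P : ℂ := ∑ u : Fin n → Bool, ((pbar u : ℝ) : ℂ) with hP
  have hcard : ((Finset.univ : Finset (Fin n → Bool)).card : ℂ) = (2:ℂ)^n := by
    rw [Finset.card_univ, Fintype.card_fun]
    push_cast
    simp
  have hBk : ∀ k, Bk n k (ampDamp n pbar)
      = ((-Complex.I)^k / ((2:ℂ)^n * (n.choose k : ℂ))) *
        ∑ S ∈ (Finset.univ : Finset (Fin n)).powersetCard k, ∑ x : Fin n → Bool,
          (∏ j ∈ S, (if x j then (-1:ℂ) else 1)) *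
            ((∑ u : Fin n → Bool, ((pbar u:ℝ):ℂ) *
                ∏ l ∈ S, (Complex.I * (if u l then (-1:ℂ) else 1)))
              + (∏ l ∈ S, (Complex.I * (if x l then (-1:ℂ) else 1)))
                * (1 - (2:ℂ)^n * ((pbar x:ℝ):ℂ))) := by
    intro k
    unfold Bk gammaD
    rw [Finset.sum_comm]
    congr 1
    refine Finset.sum_congr rfl fun S _ => Finset.sum_congr rfl fun x _ => ?_
    rw [trace_std, ampDamp_diag hp0 hp1]
  have hprodI : ∀ (S : Finset (Fin n)) (x : Fin n → Bool),
      ∏ l ∈ S, (Complex.I * (if x l then (-1:ℂ) else 1))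
        = Complex.I ^ S.card * ∏ l ∈ S, (if x l then (-1:ℂ) else 1) := by
    intro S x
    rw [Finset.prod_mul_distrib, Finset.prod_const]
  have hsum1 : ∑ _x : Fin n → Bool, (1:ℂ) = (2:ℂ)^n := by
    rw [Finset.sum_const, nsmul_eq_mul, mul_one, hcard]
  constructor
  · intro k hk1 hkn
    have hinner : ∀ S ∈ (Finset.univ : Finset (Fin n)).powersetCard k,
        ∑ x : Fin n → Bool,
          (∏ j ∈ S, (if x j then (-1:ℂ) else 1)) *
            ((∑ u : Fin n → Bool, ((pbar u:ℝ):ℂ) *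
                ∏ l ∈ S, (Complex.I * (if u l then (-1:ℂ) else 1)))
              + (∏ l ∈ S, (Complex.I * (if x l then (-1:ℂ) else 1)))
                * (1 - (2:ℂ)^n * ((pbar x:ℝ):ℂ)))
        = Complex.I ^ k * ((2:ℂ)^n - (2:ℂ)^n * P) := by
      intro S hS
      have hScard : S.card = k := (Finset.mem_powersetCard.mp hS).2
      have hSne : S.Nonempty := Finset.card_pos.mp (by omega)
      have step : ∀ x : Fin n → Bool,
          (∏ j ∈ S, (if x j then (-1:ℂ) else 1)) *
            ((∑ u : Fin n → Bool, ((pbar u:ℝ):ℂ) *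
                ∏ l ∈ S, (Complex.I * (if u l then (-1:ℂ) else 1)))
              + (∏ l ∈ S, (Complex.I * (if x l then (-1:ℂ) else 1)))
                * (1 - (2:ℂ)^n * ((pbar x:ℝ):ℂ)))
          = (∏ j ∈ S, (if x j then (-1:ℂ) else 1)) *
              (∑ u : Fin n → Bool, ((pbar u:ℝ):ℂ) *
                ∏ l ∈ S, (Complex.I * (if u l then (-1:ℂ) else 1)))
            + Complex.I ^ k * (1 - (2:ℂ)^n * ((pbar x:ℝ):ℂ)) := by
        intro x
        rw [mul_add, hprodI S x, hScard]
        congr 1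
        calc (∏ j ∈ S, (if x j then (-1:ℂ) else 1)) *
              (Complex.I ^ k * (∏ l ∈ S, (if x l then (-1:ℂ) else 1))
                * (1 - (2:ℂ)^n * ((pbar x:ℝ):ℂ)))
            = ((∏ j ∈ S, (if x j then (-1:ℂ) else 1)) *
                (∏ l ∈ S, (if x l then (-1:ℂ) else 1))) *
              (Complex.I ^ k * (1 - (2:ℂ)^n * ((pbar x:ℝ):ℂ))) := by ring
          _ = _ := by rw [chi_sq S x, one_mul]
      rw [Finset.sum_congr rfl fun x _ => step x, Finset.sum_add_distrib, ← Finset.sum_mul,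
        sum_chi_zero S hSne, zero_mul, zero_add, ← Finset.mul_sum]
      congr 1
      rw [Finset.sum_sub_distrib, hsum1, ← Finset.mul_sum, ← hP]
    rw [hBk k, Finset.sum_congr rfl hinner, Finset.sum_const, Finset.card_powersetCard,
      Finset.card_univ, Fintype.card_fin, nsmul_eq_mul]
    have hC : ((n.choose k : ℕ) : ℂ) ≠ 0 := Nat.cast_ne_zero.mpr (Nat.choose_pos hkn).ne'
    have h2 : ((2:ℂ)^n) ≠ 0 := pow_ne_zero _ two_ne_zero
    have hIk : (-Complex.I)^k * Complex.I^k = 1 := by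
      rw [← mul_pow]
      norm_num [Complex.I_mul_I]
    rw [div_mul_eq_mul_div, div_eq_iff (mul_ne_zero h2 hC)]
    linear_combination ((2:ℂ)^n * (n.choose k : ℂ) * (1 - P)) * hIk
  · rw [hBk 0]
    rw [Finset.powersetCard_zero]
    simp only [Finset.sum_singleton, Finset.prod_empty, one_mul, mul_one, pow_zero,
      Nat.choose_zero_right, Nat.cast_one, mul_one]
    rw [Finset.sum_add_distrib, Finset.sum_const, Finset.sum_sub_distrib, hsum1,
      ← Finset.mul_sum, ← hP, nsmul_eq_mul, hcard]
    have h2 : ((2:ℂ)^n) ≠ 0 := pow_ne_zero _ two_ne_zero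
    field_simp
    ring
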